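/- arXiv:1610.03168 — 2 statements merged into one kernel-verified Lean document; each statement's English description precedes it below -/
import Mathlib

section
/- Let G be a discrete group of isometries of Euclidean n-space and let u be a point not fixed by any non-identity element of G. For each r in G \ {1}, let H[r(u)] be the open half-space containing u bounded by the perpendicular bisector hyperplane of the segment from u to r(u). Then D := ⋂_{r ∈ G \ {1}} H[r(u)] satisfies r(D) ∩ D = ∅ for all non-identity r in G. -/
/-- Dirichlet region construction. If `G` is a discrete group of isometries
of Euclidean `n`-space and `u` is a point with trivial stabilizer, then the open
Dirichlet region `D = ⋂_{r ∈ G \ {1}} H[r(u)]` satisfies `r(D) ∩ D = ∅` for all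
non-identity `r ∈ G`. -/
theorem dirichlet_region_disjoint (n : ℕ)
    (G : Subgroup (EuclideanSpace ℝ (Fin n) ≃ᵢ EuclideanSpace ℝ (Fin n)))
    (hdisc : ∀ x : EuclideanSpace ℝ (Fin n),
      IsClosed {y | ∃ r ∈ G, r x = y} ∧ DiscreteTopology {y | ∃ r ∈ G, r x = y})
    (u : EuclideanSpace ℝ (Fin n))
    (hu : ∀ r ∈ G, r u = u → r = 1) :
    ∀ r ∈ G, r ≠ 1 →
      ((r : EuclideanSpace ℝ (Fin n) ≃ᵢ EuclideanSpace ℝ (Fin n)) ''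
          {x | ∀ s ∈ G, s ≠ 1 → dist x u < dist x (s u)}) ∩
        {x | ∀ s ∈ G, s ≠ 1 → dist x u < dist x (s u)} = ∅ := by
  intro r hr hr1
  ext y
  simp only [Set.mem_inter_iff, Set.mem_image, Set.mem_setOf_eq, Set.mem_empty_iff_false,
    iff_false]
  rintro ⟨⟨x, hx, rfl⟩, hy⟩
  have hrinv : r⁻¹ ≠ 1 := by
    intro h; exact hr1 (by simpa using congrArg (·⁻¹) h)
  have h1 : dist x u < dist x (r⁻¹ u) := hx _ (inv_mem hr) hrinv
  have h2 : dist (r x) u < dist (r x) (r u) := hy _ hr hr1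
  have e1 : dist x (r⁻¹ u) = dist (r x) u := by
    rw [← r.isometry.dist_eq (x) (r⁻¹ u)]
    simp
  have e2 : dist (r x) (r u) = dist x u := r.isometry.dist_eq x u
  rw [e1] at h1
  rw [e2] at h2
  exact absurd (h1.trans h2) (lt_irrefl _)
end

section
/- With G, u, D as in the Dirichlet region construction (G discrete group of isometries of ℝⁿ, u a point with trivial stabilizer, D the open Dirichlet region centered at u), Euclidean n-space equals the union over r ∈ G of r(closure(D)); that is, every point of ℝⁿ lies in the closure of some G-translate of D. -/
/-!
Since the orbit `G u` is closed, a point `x` has a nearest orbit point `r u`. Then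
`w = r⁻¹ x` is at least as close to `u` as to any other orbit point `s u`, i.e. `w` lies in
every closed half-space `{dist · u ≤ dist · (s u)}`. The open segment from `u` to `w` lies in
the corresponding open half-spaces, hence in `D`, so `w ∈ closure D` and `x = r w`.
-/

theorem dist_sq_eq_dist_sq_add_dist_sq_add_inner {E : Type*} [NormedAddCommGroup E]
    [InnerProductSpace ℝ E] (p u v : E) :
    dist p v ^ 2 = dist p u ^ 2 + dist u v ^ 2 + 2 * inner ℝ (p - u) (u - v) := by
  rw [dist_eq_norm, dist_eq_norm, dist_eq_norm, ← sub_add_sub_cancel p u v, norm_add_sq_real]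
  ring

theorem dist_lt_dist_of_mem_openSegment {E : Type*} [NormedAddCommGroup E]
    [InnerProductSpace ℝ E] {u v w p : E} (huv : u ≠ v) (hw : dist w u ≤ dist w v)
    (hp : p ∈ openSegment ℝ u w) : dist p u < dist p v := by
  rw [openSegment_eq_image'] at hp
  obtain ⟨θ, ⟨hθ0, hθ1⟩, rfl⟩ := hp
  have hw2 : dist w u ^ 2 ≤ dist w v ^ 2 := pow_le_pow_left₀ dist_nonneg hw 2
  rw [dist_sq_eq_dist_sq_add_dist_sq_add_inner w u v] at hw2
  have huv2 : 0 < dist u v ^ 2 := pow_pos (dist_pos.mpr huv) 2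
  refine lt_of_pow_lt_pow_left₀ 2 dist_nonneg ?_
  rw [dist_sq_eq_dist_sq_add_dist_sq_add_inner _ u v, add_sub_cancel_left, inner_smul_left]
  simp only [RCLike.conj_to_real]
  nlinarith

theorem mem_closure_setOf_forall_dist_lt {E : Type*} [NormedAddCommGroup E]
    [InnerProductSpace ℝ E] {u w : E} {S : Set E} (hu : u ∉ S)
    (hw : ∀ v ∈ S, dist w u ≤ dist w v) : w ∈ closure {y | ∀ v ∈ S, dist y u < dist y v} :=
  have hseg : openSegment ℝ u w ⊆ {y | ∀ v ∈ S, dist y u < dist y v} := fun _ hp v hv =>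
    dist_lt_dist_of_mem_openSegment (ne_of_mem_of_not_mem hv hu).symm (hw v hv) hp
  closure_mono hseg (segment_subset_closure_openSegment (right_mem_segment ℝ u w))

theorem exists_mem_forall_dist_apply_le {α : Type*} [MetricSpace α] [ProperSpace α]
    (G : Subgroup (α ≃ᵢ α)) (u x : α) (hclosed : IsClosed {y | ∃ r ∈ G, r u = y}) :
    ∃ r ∈ G, ∀ s ∈ G, dist x (r u) ≤ dist x (s u) := by
  obtain ⟨_, ⟨r, hr, rfl⟩, hmin⟩ := hclosed.exists_infDist_eq_dist ⟨u, 1, G.one_mem, rfl⟩ x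
  exact ⟨r, hr, fun s hs => hmin ▸ Metric.infDist_le_dist_of_mem ⟨s, hs, rfl⟩⟩

theorem exists_mem_forall_dist_symm_apply_le {α : Type*} [MetricSpace α] [ProperSpace α]
    (G : Subgroup (α ≃ᵢ α)) (u x : α) (hclosed : IsClosed {y | ∃ r ∈ G, r u = y}) :
    ∃ r ∈ G, ∀ s ∈ G, dist (r.symm x) u ≤ dist (r.symm x) (s u) := by
  obtain ⟨r, hr, hmin⟩ := exists_mem_forall_dist_apply_le G u x hclosed
  refine ⟨r, hr, fun s hs => ?_⟩
  rw [← r.dist_eq (r.symm x), ← r.dist_eq (r.symm x), r.apply_symm_apply]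
  exact hmin (r * s) (G.mul_mem hr hs)

/-- With `G`, `u`, `D` as in the Dirichlet region construction, Euclidean
`n`-space is the union over `r ∈ G` of `r(closure D)`: every point lies in the closure
of some `G`-translate of `D`. -/
theorem dirichlet_region_covers (n : ℕ)
    (G : Subgroup (EuclideanSpace ℝ (Fin n) ≃ᵢ EuclideanSpace ℝ (Fin n)))
    (hdisc : ∀ x : EuclideanSpace ℝ (Fin n),
      IsClosed {y | ∃ r ∈ G, r x = y} ∧ DiscreteTopology {y | ∃ r ∈ G, r x = y})
    (u : EuclideanSpace ℝ (Fin n))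
    (hu : ∀ r ∈ G, r u = u → r = 1) :
    ∀ x : EuclideanSpace ℝ (Fin n), ∃ r ∈ G,
      x ∈ (r : EuclideanSpace ℝ (Fin n) ≃ᵢ EuclideanSpace ℝ (Fin n)) ''
        closure {y | ∀ s ∈ G, s ≠ 1 → dist y u < dist y (s u)} := by
  intro x
  obtain ⟨r, hr, hmin⟩ := exists_mem_forall_dist_symm_apply_le G u x (hdisc u).1
  refine ⟨r, hr, r.symm x, ?_, r.apply_symm_apply x⟩
  set S := {v | ∃ s ∈ G, s ≠ 1 ∧ s u = v}
  have huS : u ∉ S := fun ⟨s, hs, hs1, hsu⟩ => hs1 (hu s hs hsu)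
  have hD : {y | ∀ v ∈ S, dist y u < dist y v} ⊆
      {y | ∀ s ∈ G, s ≠ 1 → dist y u < dist y (s u)} :=
    fun _ hy s hs hs1 => hy _ ⟨s, hs, hs1, rfl⟩
  exact closure_mono hD <| mem_closure_setOf_forall_dist_lt huS fun _ ⟨s, hs, _, hsu⟩ =>
    hsu ▸ hmin s hs
end
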